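/- Let g : ℝⁿ → ℝᵐ satisfy g(0) = 0, let g be differentiable on the closed ball B = {x : ‖x‖ ≤ ρ} with derivative L-Lipschitz on B in the operator norm (‖g'(x) − g'(x')‖ ≤ L‖x − x'‖ for x, x' ∈ B), and suppose there is μ₀ > 0 with ‖g'(0)ᵀh‖ ≥ μ₀‖h‖ for all h ∈ ℝᵐ. If ‖y‖ < μ₀²/(4L) and μ₀/(2L) ≤ ρ, then there exists x* with g(x*) = y and ‖x*‖ ≤ 2‖y‖/μ₀. -/

import Mathlib

/-!
Minimize `φ x = ‖g x - y‖ + (μ₀ / 2) ‖x‖` over the ball of radius `μ₀ / (2L)`. Comparing with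
`φ 0 = ‖y‖` shows that a minimizer `x₀` has `‖x₀‖ ≤ 2‖y‖ / μ₀`, which the smallness of `y` puts in
the interior of the ball. There `‖g'(x₀) - g'(0)‖ ≤ L‖x₀‖ < μ₀ / 2`, so `g'(x₀)ᵀ` is still bounded
below by more than `μ₀ / 2`. If `w = g x₀ - y ≠ 0`, moving from `x₀` in the direction `-g'(x₀)ᵀ w`
decreases `‖g x - y‖` at rate `‖g'(x₀)ᵀ w‖ / ‖w‖ > μ₀ / 2` while increasing `‖x‖` at rate at most
`1`, contradicting minimality. Hence `g x₀ = y`.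
-/

open Metric ContinuousLinearMap Set Filter
open scoped RealInnerProductSpace Topology

theorem IsLocalMinOn.hasDerivWithinAt_Ici_nonneg {f : ℝ → ℝ} {a f' : ℝ}
    (h : IsLocalMinOn f (Ici a) a) (hf : HasDerivWithinAt f f' (Ici a) a) : 0 ≤ f' := by
  have hone : (1 : ℝ) ∈ posTangentConeAt (Ici a) a :=
    mem_posTangentConeAt_of_segment_subset (by simp [segment_eq_Icc, Icc_subset_Ici_self])
  simpa using h.hasFDerivWithinAt_nonneg hf.hasFDerivWithinAt hone

section InnerProductSpace

variable {E F : Type*} [NormedAddCommGroup E] [InnerProductSpace ℝ E]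
  [NormedAddCommGroup F] [InnerProductSpace ℝ F]

theorem HasDerivAt.norm_of_ne_zero {G : ℝ → F} {G' : F} {t : ℝ} (hG : HasDerivAt G G' t)
    (h0 : G t ≠ 0) : HasDerivAt (fun s => ‖G s‖) (⟪G t, G'⟫ / ‖G t‖) t := by
  have hsq := hG.norm_sq.sqrt (by simpa using h0)
  simp only [Real.sqrt_sq (norm_nonneg _)] at hsq
  convert hsq using 1
  field_simp

variable [CompleteSpace E] [CompleteSpace F]

theorem le_norm_adjoint_apply_of_norm_sub_le {A B : E →L[ℝ] F} {μ δ : ℝ}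
    (hA : ∀ h, μ * ‖h‖ ≤ ‖adjoint A h‖) (hAB : ‖A - B‖ ≤ δ) (h : F) :
    (μ - δ) * ‖h‖ ≤ ‖adjoint B h‖ := by
  have hdiff : ‖adjoint A h - adjoint B h‖ ≤ δ * ‖h‖ :=
    calc ‖adjoint A h - adjoint B h‖ = ‖adjoint (A - B) h‖ := by rw [map_sub, sub_apply]
      _ ≤ ‖adjoint (A - B)‖ * ‖h‖ := le_opNorm _ _
      _ ≤ δ * ‖h‖ := by rw [LinearIsometryEquiv.norm_map]; gcongr
  linarith [hA h, norm_le_norm_add_norm_sub' (adjoint A h) (adjoint B h)]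

theorem not_isLocalMin_norm_sub_add_mul_norm {g : E → F} {A : E →L[ℝ] F} {x₀ : E} {y : F}
    {c : ℝ} (hg : HasFDerivAt g A x₀) (hc : 0 ≤ c) (hne : g x₀ ≠ y)
    (hA : c * ‖g x₀ - y‖ < ‖adjoint A (g x₀ - y)‖) :
    ¬ IsLocalMin (fun x => ‖g x - y‖ + c * ‖x‖) x₀ := by
  intro hmin
  set w := g x₀ - y
  set a := adjoint A w
  have hw : 0 < ‖w‖ := norm_pos_iff.2 (sub_ne_zero.2 hne)
  have ha : 0 < ‖a‖ := (mul_nonneg hc hw.le).trans_lt hA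
  set v := -‖a‖⁻¹ • a
  have hv : ‖v‖ = 1 := by
    rw [norm_smul, norm_neg, norm_inv, norm_norm, inv_mul_cancel₀ ha.ne']
  -- `t ↦ ‖x₀‖ + t` majorizes `t ↦ ‖x₀ + t • v‖` for `t ≥ 0`, and agrees with it at `0`.
  set f : ℝ → ℝ := fun t => ‖g (x₀ + t • v) - y‖ + c * (‖x₀‖ + t)
  have hline : Continuous fun t : ℝ => x₀ + t • v := by fun_prop
  have hfmin : IsLocalMinOn f (Ici 0) 0 := by
    have := IsLocalMin.comp_continuous (b := (0 : ℝ)) (by simpa using hmin) hline.continuousAt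
    filter_upwards [nhdsWithin_le_nhds this, self_mem_nhdsWithin] with t ht (ht0 : 0 ≤ t)
    have hnorm : ‖x₀ + t • v‖ ≤ ‖x₀‖ + t := by
      simpa [norm_smul, hv, abs_of_nonneg ht0] using norm_add_le x₀ (t • v)
    simp only [Function.comp_def, zero_smul, add_zero] at ht
    simp only [f, zero_smul, add_zero]
    nlinarith
  have hGv : HasDerivAt (fun t : ℝ => g (x₀ + t • v) - y) (A v) 0 := by
    have hl : HasDerivAt (fun t : ℝ => x₀ + t • v) v 0 := by
      simpa using ((hasDerivAt_id (0 : ℝ)).smul_const v).const_add x₀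
    exact ((by simpa using hg : HasFDerivAt g A (x₀ + (0 : ℝ) • v)).comp_hasDerivAt 0 hl).sub_const y
  have hinner : ⟪w, A v⟫ = -‖a‖ := by
    rw [← adjoint_inner_left]
    change ⟪a, v⟫ = -‖a‖
    rw [inner_smul_right, real_inner_self_eq_norm_sq]
    field_simp
  have hf : HasDerivAt f (⟪w, A v⟫ / ‖w‖ + c) 0 := by
    have h := (hGv.norm_of_ne_zero (by simpa using sub_ne_zero.2 hne)).add
      (((hasDerivAt_id' (0 : ℝ)).const_add ‖x₀‖).const_mul c)
    rwa [zero_smul, add_zero, mul_one] at h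
  have hslope := hfmin.hasDerivWithinAt_Ici_nonneg hf.hasDerivWithinAt
  rw [hinner, neg_div] at hslope
  linarith [(div_le_iff₀ hw).1 (by linarith : ‖a‖ / ‖w‖ ≤ c)]

end InnerProductSpace

theorem exists_isLocalMin_norm_sub_add_mul_norm {E F : Type*} [NormedAddCommGroup E]
    [ProperSpace E] [NormedAddCommGroup F] {g : E → F} {R c : ℝ} {y : F}
    (hg : ContinuousOn g (closedBall 0 R)) (hg0 : g 0 = 0) (hc : 0 < c) (hy : ‖y‖ < c * R) :
    ∃ x₀, ‖x₀‖ ≤ ‖y‖ / c ∧ IsLocalMin (fun x => ‖g x - y‖ + c * ‖x‖) x₀ := by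
  have hR : 0 ≤ R := nonneg_of_mul_nonneg_right ((norm_nonneg y).trans_lt hy).le hc
  obtain ⟨x₀, -, hmin⟩ := (isCompact_closedBall (0 : E) R).exists_isMinOn
    (f := fun x => ‖g x - y‖ + c * ‖x‖) (nonempty_closedBall.2 hR)
    ((hg.sub continuousOn_const).norm.add (continuousOn_const.mul continuous_norm.continuousOn))
  have hbound : ‖x₀‖ ≤ ‖y‖ / c := by
    have := hmin (mem_closedBall_self hR)
    simp only [mem_ofPred_eq, hg0, zero_sub, norm_neg, norm_zero, mul_zero, add_zero] at this
    rw [le_div_iff₀ hc]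
    linarith [norm_nonneg (g x₀ - y)]
  have hint : ‖x₀‖ < R := hbound.trans_lt ((div_lt_iff₀ hc).2 (by linarith))
  exact ⟨x₀, hbound, hmin.isLocalMin (closedBall_mem_nhds_of_mem (by simpa using hint))⟩

/-- solvability with the single-point condition `‖g'(0)ᵀh‖ ≥ μ₀‖h‖`. -/
theorem stmt4 {n m : ℕ} (ρ L μ₀ : ℝ) (hρ : 0 < ρ) (hL : 0 < L) (hμ₀ : 0 < μ₀)
    (g : EuclideanSpace ℝ (Fin n) → EuclideanSpace ℝ (Fin m))
    (g' : EuclideanSpace ℝ (Fin n) →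
      (EuclideanSpace ℝ (Fin n) →L[ℝ] EuclideanSpace ℝ (Fin m)))
    (hg0 : g 0 = 0)
    (hdiff : ∀ x ∈ Metric.closedBall (0 : EuclideanSpace ℝ (Fin n)) ρ,
      HasFDerivWithinAt g (g' x) (Metric.closedBall 0 ρ) x)
    (hLip : ∀ x ∈ Metric.closedBall (0 : EuclideanSpace ℝ (Fin n)) ρ,
      ∀ x' ∈ Metric.closedBall (0 : EuclideanSpace ℝ (Fin n)) ρ,
        ‖g' x - g' x'‖ ≤ L * ‖x - x'‖)
    (hμ0 : ∀ h : EuclideanSpace ℝ (Fin m),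
      μ₀ * ‖h‖ ≤ ‖ContinuousLinearMap.adjoint (g' 0) h‖)
    (y : EuclideanSpace ℝ (Fin m))
    (hy : ‖y‖ < μ₀ ^ 2 / (4 * L)) (hr : μ₀ / (2 * L) ≤ ρ) :
    ∃ x : EuclideanSpace ℝ (Fin n), g x = y ∧ ‖x‖ ≤ 2 * ‖y‖ / μ₀ := by
  have hsub : closedBall (0 : EuclideanSpace ℝ (Fin n)) (μ₀ / (2 * L)) ⊆ closedBall 0 ρ :=
    closedBall_subset_closedBall hr
  obtain ⟨x₀, hx₀, hmin⟩ := exists_isLocalMin_norm_sub_add_mul_norm (c := μ₀ / 2)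
    (fun x hx => (hdiff x (hsub hx)).continuousWithinAt.mono hsub) hg0 (by positivity)
    (by convert hy using 1; field_simp; ring)
  have hLx₀ : L * ‖x₀‖ < μ₀ / 2 := by
    have h1 := (le_div_iff₀ (by positivity)).1 hx₀
    have h2 := (lt_div_iff₀ (by positivity)).1 hy
    nlinarith
  have hx₀ρ : x₀ ∈ ball 0 ρ := by
    rw [mem_ball_zero_iff]
    exact ((lt_div_iff₀' (by positivity)).2 (by linarith)).trans_le hr
  refine ⟨x₀, ?_, by rwa [div_div_eq_mul_div, mul_comm] at hx₀⟩
  by_contra hne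
  refine not_isLocalMin_norm_sub_add_mul_norm ((hdiff x₀ (ball_subset_closedBall hx₀ρ)).hasFDerivAt
    (closedBall_mem_nhds_of_mem hx₀ρ)) (by positivity) hne ?_ hmin
  have hlip : ‖g' 0 - g' x₀‖ ≤ L * ‖x₀‖ := by
    simpa using hLip 0 (mem_closedBall_self hρ.le) x₀ (ball_subset_closedBall hx₀ρ)
  have hw : 0 < ‖g x₀ - y‖ := norm_pos_iff.2 (sub_ne_zero.2 hne)
  nlinarith [le_norm_adjoint_apply_of_norm_sub_le hμ0 hlip (g x₀ - y)]
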